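/- Let S be the set of n×n matrices with entries in {0,1} having exactly E entries equal to 1, where 0 < E < n². Define d₁(A,B) = 1 − (1/E)·Σ_{i,j} A_{ij}B_{ij}. Then d₁ satisfies the triangle inequality: for all A, B, C ∈ S, d₁(A,B) + d₁(B,C) ≥ d₁(A,C). -/

import Mathlib

/-!
Pointwise, for `a b c ∈ [0, 1]` one has `a b + b c ≤ b + a c`: if `a + c ≤ 1` the left side is
at most `b (a + c) ≤ b`, and otherwise `b (a + c - 1) ≤ a + c - 1 ≤ a c` because
`(1 - a)(1 - c) ≥ 0`. Summing over the entries and dividing by `E = ∑ B` gives the triangle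
inequality for `d₁`.
-/

open Finset

variable {R : Type*} [CommRing R] [LinearOrder R] [IsStrictOrderedRing R]

theorem mul_add_mul_le_add_mul_of_mem_Icc {a b c : R} (ha : a ∈ Set.Icc 0 1)
    (hb : b ∈ Set.Icc 0 1) (hc : c ∈ Set.Icc 0 1) : a * b + b * c ≤ b + a * c := by
  obtain ⟨ha0, ha1⟩ := ha
  obtain ⟨hb0, hb1⟩ := hb
  obtain ⟨hc0, hc1⟩ := hc
  rcases le_total (a + c) 1 with hac | hac
  · nlinarith [mul_nonneg ha0 hc0]
  · nlinarith [mul_nonneg (sub_nonneg.2 ha1) (sub_nonneg.2 hc1)]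

theorem Matrix.sum_mul_add_sum_mul_le_of_mem_Icc {m n : Type*} [Fintype m] [Fintype n]
    (A B C : Matrix m n R) (hA : ∀ i j, A i j ∈ Set.Icc 0 1)
    (hB : ∀ i j, B i j ∈ Set.Icc 0 1) (hC : ∀ i j, C i j ∈ Set.Icc 0 1) :
    ∑ i, ∑ j, A i j * B i j + ∑ i, ∑ j, B i j * C i j ≤
      ∑ i, ∑ j, B i j + ∑ i, ∑ j, A i j * C i j := by
  simp only [← sum_add_distrib]
  exact sum_le_sum fun i _ ↦ sum_le_sum fun j _ ↦
    mul_add_mul_le_add_mul_of_mem_Icc (hA i j) (hB i j) (hC i j)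

theorem stmt2_general (n E : ℕ)
    (A B C : Matrix (Fin n) (Fin n) ℕ)
    (hA01 : ∀ i j, A i j = 0 ∨ A i j = 1) (hB01 : ∀ i j, B i j = 0 ∨ B i j = 1)
    (hC01 : ∀ i j, C i j = 0 ∨ C i j = 1)
    (hBE : ∑ i, ∑ j, B i j = E) :
    (1 - (1 / (E : ℝ)) * ∑ i, ∑ j, (A i j : ℝ) * (C i j : ℝ)) ≤
      (1 - (1 / (E : ℝ)) * ∑ i, ∑ j, (A i j : ℝ) * (B i j : ℝ)) +
      (1 - (1 / (E : ℝ)) * ∑ i, ∑ j, (B i j : ℝ) * (C i j : ℝ)) := by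
  have mem_Icc {M : Matrix (Fin n) (Fin n) ℕ} (hM : ∀ i j, M i j = 0 ∨ M i j = 1)
      (i j : Fin n) : (M i j : ℝ) ∈ Set.Icc 0 1 := by
    rcases hM i j with h | h <;> simp [h]
  have key := Matrix.sum_mul_add_sum_mul_le_of_mem_Icc (A.map ((↑) : ℕ → ℝ)) (B.map (↑))
    (C.map (↑)) (mem_Icc hA01) (mem_Icc hB01) (mem_Icc hC01)
  have hB : ∑ i, ∑ j, (B i j : ℝ) = E := by exact_mod_cast hBE
  simp only [Matrix.map_apply, hB] at key
  have hEinv : 1 / (E : ℝ) * E ≤ 1 := by rw [one_div_mul_eq_div]; exact div_self_le_one _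
  nlinarith [mul_le_mul_of_nonneg_left key (by positivity : (0 : ℝ) ≤ 1 / E)]

/-- d₁ satisfies the triangle inequality on n×n binary matrices with exactly E ones. -/
theorem stmt2 (n E : ℕ) (hE : 0 < E) (hEn : E < n ^ 2)
    (A B C : Matrix (Fin n) (Fin n) ℕ)
    (hA01 : ∀ i j, A i j = 0 ∨ A i j = 1) (hB01 : ∀ i j, B i j = 0 ∨ B i j = 1)
    (hC01 : ∀ i j, C i j = 0 ∨ C i j = 1)
    (hAE : ∑ i, ∑ j, A i j = E) (hBE : ∑ i, ∑ j, B i j = E) (hCE : ∑ i, ∑ j, C i j = E) :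
    (1 - (1 / (E : ℝ)) * ∑ i, ∑ j, (A i j : ℝ) * (C i j : ℝ)) ≤
      (1 - (1 / (E : ℝ)) * ∑ i, ∑ j, (A i j : ℝ) * (B i j : ℝ)) +
      (1 - (1 / (E : ℝ)) * ∑ i, ∑ j, (B i j : ℝ) * (C i j : ℝ)) :=
  stmt2_general n E A B C hA01 hB01 hC01 hBE
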